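/- Let f : G × G → ℝ be a smooth cost function and ⟨·,·⟩ any Riemannian metric on G. Consider the left invariant system Ẋ = Xu and a general observer X̂̇ = F(X̂, Y, w, t) with measurements Y = X and w = u, where F(X̂, Y, w, t) ∈ T_{X̂}G. Then the canonical right invariant error E_r(t) = X̂(t)X(t)⁻¹ satisfies the autonomous gradient dynamics Ė_r = −grad₁ f(E_r, e) along every pair of solutions for every admissible input if and only if F(X̂, Y, w, t) = X̂w − T_{X̂Y⁻¹} R_Y (grad₁ f(X̂Y⁻¹, e)). Analogously, for the right invariant system Ẋ = vX with measurements Y = X, w = v, the canonical left invariant error E_l(t) = X(t)⁻¹X̂(t) satisfies Ė_l = −grad₁ f(E_l, e) along all solution pairs if and only if F(X̂, Y, w, t) = wX̂ − T_{Y⁻¹X̂} L_Y (grad₁ f(Y⁻¹X̂, e)). -/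

import Mathlib

open scoped Manifold
open Filter Topology

/-- `TransL I a b` is the tangent map `T_b L_a` of left translation `L_a : g ↦ a * g`
at the point `b`, with all tangent spaces of the Lie group canonically identified
with the model space `E`. -/
noncomputable def TransL {E : Type*} [NormedAddCommGroup E] [NormedSpace ℝ E]
    {H : Type*} [TopologicalSpace H] (I : ModelWithCorners ℝ E H)
    {G : Type*} [TopologicalSpace G] [ChartedSpace H G] [Group G]
    (a b : G) : E →L[ℝ] E :=
  mfderiv I I (fun g => a * g) b

/-- `TransR I a b` is the tangent map `T_b R_a` of right translation `R_a : g ↦ g * a`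
at the point `b`. -/
noncomputable def TransR {E : Type*} [NormedAddCommGroup E] [NormedSpace ℝ E]
    {H : Type*} [TopologicalSpace H] (I : ModelWithCorners ℝ E H)
    {G : Type*} [TopologicalSpace G] [ChartedSpace H G] [Group G]
    (a b : G) : E →L[ℝ] E :=
  mfderiv I I (fun g => g * a) b

/-- `cVel I X t` is the velocity `Ẋ(t)` of the curve `X : ℝ → G`. -/
noncomputable def cVel {E : Type*} [NormedAddCommGroup E] [NormedSpace ℝ E]
    {H : Type*} [TopologicalSpace H] (I : ModelWithCorners ℝ E H)
    {G : Type*} [TopologicalSpace G] [ChartedSpace H G]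
    (X : ℝ → G) (t : ℝ) : E :=
  mfderiv 𝓘(ℝ) I X t (1 : ℝ)

/-- The curve `X` is a (smooth, globally defined) solution of the left invariant
system `Ẋ = Xu` with input `u : ℝ → 𝔤` (the Lie algebra `𝔤 = T_eG` being
identified with the model space `E`). -/
def SolLeftInvSys {E : Type*} [NormedAddCommGroup E] [NormedSpace ℝ E]
    {H : Type*} [TopologicalSpace H] (I : ModelWithCorners ℝ E H)
    {G : Type*} [TopologicalSpace G] [ChartedSpace H G] [Group G]
    (u : ℝ → E) (X : ℝ → G) : Prop :=
  ContMDiff 𝓘(ℝ) I (⊤ : ℕ∞) X ∧ ∀ t, cVel I X t = TransL I (X t) 1 (u t)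

/-- The curve `X` is a (smooth, globally defined) solution of the right invariant
system `Ẋ = vX` with input `v : ℝ → 𝔤`. -/
def SolRightInvSys {E : Type*} [NormedAddCommGroup E] [NormedSpace ℝ E]
    {H : Type*} [TopologicalSpace H] (I : ModelWithCorners ℝ E H)
    {G : Type*} [TopologicalSpace G] [ChartedSpace H G] [Group G]
    (v : ℝ → E) (X : ℝ → G) : Prop :=
  ContMDiff 𝓘(ℝ) I (⊤ : ℕ∞) X ∧ ∀ t, cVel I X t = TransR I (X t) 1 (v t)

/-- `dFst I f X Y η` is the differential `d₁f(X,Y)(η)` of the cost `f` with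
respect to its first argument, applied to the tangent vector `η ∈ T_X G`. -/
noncomputable def dFst {E : Type*} [NormedAddCommGroup E] [NormedSpace ℝ E]
    {H : Type*} [TopologicalSpace H] (I : ModelWithCorners ℝ E H)
    {G : Type*} [TopologicalSpace G] [ChartedSpace H G]
    (f : G → G → ℝ) (X Y : G) (η : E) : ℝ :=
  mfderiv I 𝓘(ℝ) (fun Z => f Z Y) X η

/-- `m` is (pointwise) a Riemannian metric on `G`: a symmetric positive definite
bilinear form on each tangent space (identified with the model space `E`). -/
def IsRiemMetric {E : Type*} [NormedAddCommGroup E] [NormedSpace ℝ E]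
    {G : Type*} (m : G → E →ₗ[ℝ] E →ₗ[ℝ] ℝ) : Prop :=
  (∀ (x : G) (v w : E), m x v w = m x w v) ∧ (∀ (x : G) (v : E), v ≠ 0 → 0 < m x v v)

/-- The Riemannian metric `m` is left invariant: every left translation is an
isometry. -/
def LeftInvMetric {E : Type*} [NormedAddCommGroup E] [NormedSpace ℝ E]
    {H : Type*} [TopologicalSpace H] (I : ModelWithCorners ℝ E H)
    {G : Type*} [TopologicalSpace G] [ChartedSpace H G] [Group G]
    (m : G → E →ₗ[ℝ] E →ₗ[ℝ] ℝ) : Prop :=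
  ∀ (S x : G) (v w : E), m (S * x) (TransL I S x v) (TransL I S x w) = m x v w

/-- The Riemannian metric `m` is right invariant: every right translation is an
isometry. -/
def RightInvMetric {E : Type*} [NormedAddCommGroup E] [NormedSpace ℝ E]
    {H : Type*} [TopologicalSpace H] (I : ModelWithCorners ℝ E H)
    {G : Type*} [TopologicalSpace G] [ChartedSpace H G] [Group G]
    (m : G → E →ₗ[ℝ] E →ₗ[ℝ] ℝ) : Prop :=
  ∀ (S x : G) (v w : E), m (x * S) (TransR I S x v) (TransR I S x w) = m x v w

/-- The cost `f : G × G → ℝ` is left invariant. -/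
def LeftInvCost {G : Type*} [Group G] (f : G → G → ℝ) : Prop :=
  ∀ S X Y : G, f (S * X) (S * Y) = f X Y

/-- The cost `f : G × G → ℝ` is right invariant. -/
def RightInvCost {G : Type*} [Group G] (f : G → G → ℝ) : Prop :=
  ∀ S X Y : G, f (X * S) (Y * S) = f X Y

/-- `gradf X Y = grad₁ f(X,Y) ∈ T_X G` is the Riemannian gradient of the cost `f`
with respect to its first argument, characterised by
`⟨grad₁ f(X,Y), η⟩ = d₁f(X,Y)(η)` for all `η ∈ T_X G`. -/
def IsGradFst {E : Type*} [NormedAddCommGroup E] [NormedSpace ℝ E]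
    {H : Type*} [TopologicalSpace H] (I : ModelWithCorners ℝ E H)
    {G : Type*} [TopologicalSpace G] [ChartedSpace H G]
    (m : G → E →ₗ[ℝ] E →ₗ[ℝ] ℝ) (f : G → G → ℝ) (gradf : G → G → E) : Prop :=
  ∀ (X Y : G) (η : E), m X (gradf X Y) η = dFst I f X Y η

/-- The curve `X̂` is a (smooth, globally defined) solution of the observer
`X̂̇ = F(X̂, Y, w, t)` fed with the exact measurements `Y(t) = X(t)`, `w(t) = u(t)`. -/
def SolObserver {E : Type*} [NormedAddCommGroup E] [NormedSpace ℝ E]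
    {H : Type*} [TopologicalSpace H] (I : ModelWithCorners ℝ E H)
    {G : Type*} [TopologicalSpace G] [ChartedSpace H G]
    (F : G → G → E → ℝ → E) (u : ℝ → E) (X Xh : ℝ → G) : Prop :=
  ContMDiff 𝓘(ℝ) I (⊤ : ℕ∞) Xh ∧ ∀ t, cVel I Xh t = F (Xh t) (X t) (u t) t


set_option linter.unusedSectionVars false
set_option maxHeartbeats 1000000

lemma top_ne0 : ((⊤ : ℕ∞) : WithTop ℕ∞) ≠ 0 := by simp

section Dev
variable {E : Type*} [NormedAddCommGroup E] [NormedSpace ℝ E]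
    {H : Type*} [TopologicalSpace H] {I : ModelWithCorners ℝ E H}
    {G : Type*} [TopologicalSpace G] [ChartedSpace H G] [Group G] [LieGroup I (⊤ : ℕ∞) G]

lemma mdiffL (a : G) : MDifferentiable I I (fun g : G => a * g) :=
  (contMDiff_mul_left (I := I) (n := ((⊤ : ℕ∞) : WithTop ℕ∞))).mdifferentiable top_ne0

lemma mdiffR (a : G) : MDifferentiable I I (fun g : G => g * a) :=
  (contMDiff_mul_right (I := I) (n := ((⊤ : ℕ∞) : WithTop ℕ∞))).mdifferentiable top_ne0

lemma compL (a b c : G) : TransL I (a * b) c = (TransL I a (b * c)).comp (TransL I b c) := by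
  have h1 : (fun g : G => (a * b) * g) = (fun g : G => a * g) ∘ (fun g : G => b * g) := by
    funext g; simp [mul_assoc]
  rw [TransL, h1, mfderiv_comp c (mdiffL a (b * c)) (mdiffL b c)]
  rfl

lemma compR (a b c : G) : TransR I (b * a) c = (TransR I a (c * b)).comp (TransR I b c) := by
  have h1 : (fun g : G => g * (b * a)) = (fun g : G => g * a) ∘ (fun g : G => g * b) := by
    funext g; simp [mul_assoc]
  rw [TransR, h1, mfderiv_comp c (mdiffR a (c * b)) (mdiffR b c)]
  rfl

lemma compLR (a b c : G) :
    (TransL I a (c * b)).comp (TransR I b c) = (TransR I b (a * c)).comp (TransL I a c) := by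
  have h1 : (fun g : G => a * g) ∘ (fun g : G => g * b) = (fun g : G => g * b) ∘ (fun g : G => a * g) := by
    funext g; simp [mul_assoc]
  have h2 := mfderiv_comp (I' := I) c (mdiffL a (c * b)) (mdiffR b c)
  have h3 := mfderiv_comp (I' := I) c (mdiffR b (a * c)) (mdiffL a c)
  rw [h1] at h2
  rw [TransL, TransR, TransL, TransR]; exact h2.symm.trans h3

lemma TransL_one (c : G) : TransL I 1 c = ContinuousLinearMap.id ℝ E := by
  have h1 : (fun g : G => (1 : G) * g) = id := by funext g; simp
  rw [TransL, h1, mfderiv_id]; rfl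

lemma TransR_one (c : G) : TransR I 1 c = ContinuousLinearMap.id ℝ E := by
  have h1 : (fun g : G => g * (1 : G)) = id := by funext g; simp
  rw [TransR, h1, mfderiv_id]; rfl

end Dev

section Dev
variable {E : Type*} [NormedAddCommGroup E] [NormedSpace ℝ E]
    {H : Type*} [TopologicalSpace H] {I : ModelWithCorners ℝ E H}
    {G : Type*} [TopologicalSpace G] [ChartedSpace H G] [Group G] [LieGroup I (⊤ : ℕ∞) G]

lemma mfderiv_mul_apply (x y : G) (v w : E) :
    mfderiv (I.prod I) I (fun p : G × G => p.1 * p.2) (x, y) (v, w)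
      = TransR I y x v + TransL I x y w := by
  have hmul : MDifferentiableAt (I.prod I) I (fun p : G × G => p.1 * p.2) (x, y) :=
    (contMDiff_mul I (⊤ : ℕ∞) (G := G)).mdifferentiableAt top_ne0
  have hp1 : MDifferentiableAt I (I.prod I) (fun g : G => (g, y)) x :=
    mdifferentiableAt_id.prodMk mdifferentiableAt_const
  have hp2 : MDifferentiableAt I (I.prod I) (fun g : G => (x, g)) y :=
    mdifferentiableAt_const.prodMk mdifferentiableAt_id
  have e1 : TransR I y x
      = (mfderiv (I.prod I) I (fun p : G × G => p.1 * p.2) (x, y)).comp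
        (mfderiv I (I.prod I) (fun g : G => (g, y)) x) := by
    have h : (fun g : G => g * y) = (fun p : G × G => p.1 * p.2) ∘ (fun g : G => (g, y)) := rfl
    rw [TransR, h, mfderiv_comp x hmul hp1]
  have e2 : TransL I x y
      = (mfderiv (I.prod I) I (fun p : G × G => p.1 * p.2) (x, y)).comp
        (mfderiv I (I.prod I) (fun g : G => (x, g)) y) := by
    have h : (fun g : G => x * g) = (fun p : G × G => p.1 * p.2) ∘ (fun g : G => (x, g)) := rfl
    rw [TransL, h, mfderiv_comp y hmul hp2]
  have hl : mfderiv I (I.prod I) (fun g : G => (g, y)) x = ContinuousLinearMap.inl ℝ E E :=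
    mfderiv_prod_left
  have hr : mfderiv I (I.prod I) (fun g : G => (x, g)) y = ContinuousLinearMap.inr ℝ E E :=
    mfderiv_prod_right
  rw [e1, e2, hl, hr]
  have h4 : ((v, w) : E × E) = ((v, (0 : E)) : E × E) + (((0 : E), w) : E × E) := by simp
  exact (congrArg (mfderiv (I.prod I) I (fun p : G × G => p.1 * p.2) (x, y)) h4).trans (map_add _ _ _)

lemma cVel_mul (a b : ℝ → G) (t : ℝ) (ha : MDifferentiableAt 𝓘(ℝ) I a t)
    (hb : MDifferentiableAt 𝓘(ℝ) I b t) :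
    cVel I (fun s => a s * b s) t
      = TransR I (b t) (a t) (cVel I a t) + TransL I (a t) (b t) (cVel I b t) := by
  have hmul : MDifferentiableAt (I.prod I) I (fun p : G × G => p.1 * p.2) (a t, b t) :=
    (contMDiff_mul I (⊤ : ℕ∞) (G := G)).mdifferentiableAt top_ne0
  have h1 : (fun s => a s * b s) = (fun p : G × G => p.1 * p.2) ∘ (fun s => (a s, b s)) := rfl
  have hab : MDifferentiableAt 𝓘(ℝ) (I.prod I) (fun s => (a s, b s)) t := ha.prodMk hb
  rw [cVel, h1, mfderiv_comp t hmul hab, ha.mfderiv_prod hb]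
  simp only [ContinuousLinearMap.comp_apply, ContinuousLinearMap.prod_apply]
  exact mfderiv_mul_apply (a t) (b t) _ _

end Dev

section Dev2
variable {E : Type*} [NormedAddCommGroup E] [NormedSpace ℝ E]
    {H : Type*} [TopologicalSpace H] {I : ModelWithCorners ℝ E H}
    {G : Type*} [TopologicalSpace G] [ChartedSpace H G] [Group G] [LieGroup I (⊤ : ℕ∞) G]

lemma cVel_const (y : G) (t : ℝ) : cVel I (fun _ : ℝ => y) t = 0 := by
  rw [cVel, mfderiv_const]; rfl

lemma cVel_lmul (a : G) (c : ℝ → G) (t : ℝ) (hc : MDifferentiableAt 𝓘(ℝ) I c t) :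
    cVel I (fun s => a * c s) t = TransL I a (c t) (cVel I c t) := by
  have h := cVel_mul (fun _ : ℝ => a) c t mdifferentiableAt_const hc
  rw [h, cVel_const, map_zero, zero_add]

lemma cVel_rmul (a : G) (c : ℝ → G) (t : ℝ) (hc : MDifferentiableAt 𝓘(ℝ) I c t) :
    cVel I (fun s => c s * a) t = TransR I a (c t) (cVel I c t) := by
  have h := cVel_mul c (fun _ : ℝ => a) t hc mdifferentiableAt_const
  rw [h, cVel_const, map_zero, add_zero]

lemma mdiff_inv_curve {c : ℝ → G} {t : ℝ} (hc : MDifferentiableAt 𝓘(ℝ) I c t) :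
    MDifferentiableAt 𝓘(ℝ) I (fun s => (c s)⁻¹) t :=
  ((contMDiff_inv I (⊤ : ℕ∞) (G := G)).mdifferentiableAt top_ne0).comp t hc

lemma cVel_inv (c : ℝ → G) (t : ℝ) (hc : MDifferentiableAt 𝓘(ℝ) I c t) :
    cVel I (fun s => (c s)⁻¹) t
      = -(TransR I (c t)⁻¹ 1 (TransL I (c t)⁻¹ (c t) (cVel I c t))) := by
  have hd := mdiff_inv_curve (I := I) hc
  have h0 : (fun s => (c s)⁻¹ * c s) = (fun _ : ℝ => (1 : G)) := by
    funext s; simp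
  have h1 := cVel_mul (fun s => (c s)⁻¹) c t hd hc
  rw [h0, cVel_const] at h1
  have h2 : TransR I (c t) (c t)⁻¹ (cVel I (fun s => (c s)⁻¹) t)
      = -(TransL I (c t)⁻¹ (c t) (cVel I c t)) := by
    rw [eq_comm, neg_eq_iff_add_eq_zero, add_comm]; exact h1.symm
  have h3 : (TransR I (c t)⁻¹ ((1 : G))).comp (TransR I (c t) (c t)⁻¹)
      = ContinuousLinearMap.id ℝ E := by
    have := compR (I := I) (a := (c t)⁻¹) (b := c t) (c := (c t)⁻¹)
    rw [mul_inv_cancel, inv_mul_cancel, TransR_one] at this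
    exact this.symm
  have h4 := congrArg (fun L : E →L[ℝ] E => L (cVel I (fun s => (c s)⁻¹) t)) h3
  simp only [ContinuousLinearMap.comp_apply, ContinuousLinearMap.id_apply] at h4
  rw [← h4, h2, map_neg]

lemma cVel_inv' (c : ℝ → G) (t : ℝ) (hc : MDifferentiableAt 𝓘(ℝ) I c t) :
    cVel I (fun s => (c s)⁻¹) t
      = -(TransL I (c t)⁻¹ 1 (TransR I (c t)⁻¹ (c t) (cVel I c t))) := by
  have hd := mdiff_inv_curve (I := I) hc
  have h0 : (fun s => c s * (c s)⁻¹) = (fun _ : ℝ => (1 : G)) := by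
    funext s; simp
  have h1 := cVel_mul c (fun s => (c s)⁻¹) t hc hd
  rw [h0, cVel_const] at h1
  have h2 : TransL I (c t) (c t)⁻¹ (cVel I (fun s => (c s)⁻¹) t)
      = -(TransR I (c t)⁻¹ (c t) (cVel I c t)) := by
    rw [eq_comm, neg_eq_iff_add_eq_zero]; exact h1.symm
  have h3 : (TransL I (c t)⁻¹ ((1 : G))).comp (TransL I (c t) (c t)⁻¹)
      = ContinuousLinearMap.id ℝ E := by
    have := compL (I := I) (a := (c t)⁻¹) (b := c t) (c := (c t)⁻¹)
    rw [inv_mul_cancel, mul_inv_cancel, TransL_one] at this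
    exact this.symm
  have h4 := congrArg (fun L : E →L[ℝ] E => L (cVel I (fun s => (c s)⁻¹) t)) h3
  simp only [ContinuousLinearMap.comp_apply, ContinuousLinearMap.id_apply] at h4
  rw [← h4, h2, map_neg]

end Dev2

section Dev3
variable {E : Type*} [NormedAddCommGroup E] [NormedSpace ℝ E]
    {H : Type*} [TopologicalSpace H] {I : ModelWithCorners ℝ E H}
    {G : Type*} [TopologicalSpace G] [ChartedSpace H G] [Group G] [LieGroup I (⊤ : ℕ∞) G]

/-- Mixed translation identity specialised at the identity element. -/
lemma mixed_unit (a b : G) :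
    (TransL I a b).comp (TransR I b 1) = (TransR I b a).comp (TransL I a 1) := by
  have h := compLR (I := I) a b 1
  rwa [one_mul, mul_one] at h

lemma cancelR (Y Z : G) : (TransR I Y (Z * Y⁻¹)).comp (TransR I Y⁻¹ Z)
    = ContinuousLinearMap.id ℝ E := by
  have h := compR (I := I) Y Y⁻¹ Z
  rw [inv_mul_cancel, TransR_one] at h; exact h.symm

lemma cancelL (Y Z : G) : (TransL I Y (Y⁻¹ * Z)).comp (TransL I Y⁻¹ Z)
    = ContinuousLinearMap.id ℝ E := by
  have h := compL (I := I) Y Y⁻¹ Z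
  rw [mul_inv_cancel, TransL_one] at h; exact h.symm

lemma cVel_err_r (u : ℝ → E) (X Xh : ℝ → G) (hX : SolLeftInvSys I u X)
    (hXh : ContMDiff 𝓘(ℝ) I (⊤ : ℕ∞) Xh) (t : ℝ) :
    cVel I (fun s => Xh s * (X s)⁻¹) t
      = TransR I (X t)⁻¹ (Xh t) (cVel I Xh t)
        - TransL I (Xh t) (X t)⁻¹ (TransR I (X t)⁻¹ 1 (u t)) := by
  have hXd : MDifferentiableAt 𝓘(ℝ) I X t := (hX.1.mdifferentiable top_ne0) t
  have hXhd : MDifferentiableAt 𝓘(ℝ) I Xh t := (hXh.mdifferentiable top_ne0) t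
  have hXinv : MDifferentiableAt 𝓘(ℝ) I (fun s => (X s)⁻¹) t := mdiff_inv_curve hXd
  have hstep : cVel I (fun s => (X s)⁻¹) t = -(TransR I (X t)⁻¹ 1 (u t)) := by
    have h1 := cVel_inv X t hXd
    have h2 : TransL I (X t)⁻¹ (X t) (cVel I X t) = u t := by
      rw [hX.2 t]
      have hcmp := compL (I := I) (X t)⁻¹ (X t) 1
      rw [inv_mul_cancel, mul_one, TransL_one] at hcmp
      have := congrArg (fun L : E →L[ℝ] E => L (u t)) hcmp
      simp only [ContinuousLinearMap.comp_apply, ContinuousLinearMap.id_apply] at this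
      exact this.symm
    rw [h1, h2]
  have h3 := cVel_mul Xh (fun s => (X s)⁻¹) t hXhd hXinv
  rw [h3, hstep, map_neg, sub_eq_add_neg]

lemma cVel_err_l (v : ℝ → E) (X Xh : ℝ → G) (hX : SolRightInvSys I v X)
    (hXh : ContMDiff 𝓘(ℝ) I (⊤ : ℕ∞) Xh) (t : ℝ) :
    cVel I (fun s => (X s)⁻¹ * Xh s) t
      = TransL I (X t)⁻¹ (Xh t) (cVel I Xh t)
        - TransR I (Xh t) (X t)⁻¹ (TransL I (X t)⁻¹ 1 (v t)) := by
  have hXd : MDifferentiableAt 𝓘(ℝ) I X t := (hX.1.mdifferentiable top_ne0) t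
  have hXhd : MDifferentiableAt 𝓘(ℝ) I Xh t := (hXh.mdifferentiable top_ne0) t
  have hXinv : MDifferentiableAt 𝓘(ℝ) I (fun s => (X s)⁻¹) t := mdiff_inv_curve hXd
  have hstep : cVel I (fun s => (X s)⁻¹) t = -(TransL I (X t)⁻¹ 1 (v t)) := by
    have h1 := cVel_inv' X t hXd
    have h2 : TransR I (X t)⁻¹ (X t) (cVel I X t) = v t := by
      rw [hX.2 t]
      have hcmp := compR (I := I) (X t)⁻¹ (X t) 1
      rw [mul_inv_cancel, one_mul, TransR_one] at hcmp
      have := congrArg (fun L : E →L[ℝ] E => L (v t)) hcmp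
      simp only [ContinuousLinearMap.comp_apply, ContinuousLinearMap.id_apply] at this
      exact this.symm
    rw [h1, h2]
  have h3 := cVel_mul (fun s => (X s)⁻¹) Xh t hXinv hXhd
  rw [h3, hstep, map_neg, sub_eq_add_neg, add_comm]

end Dev3

section Dev4
variable {E : Type*} [NormedAddCommGroup E] [NormedSpace ℝ E]
    {H : Type*} [TopologicalSpace H] {I : ModelWithCorners ℝ E H}
    {G : Type*} [TopologicalSpace G] [ChartedSpace H G] [Group G] [LieGroup I (⊤ : ℕ∞) G]

lemma suff_left (gradf : G → G → E) (F : G → G → E → ℝ → E)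
    (hF : ∀ (Xh Y : G) (w : E) (t : ℝ),
      F Xh Y w t = TransL I Xh 1 w - TransR I Y (Xh * Y⁻¹) (gradf (Xh * Y⁻¹) 1))
    (u : ℝ → E) (X Xh : ℝ → G) (hX : SolLeftInvSys I u X) (hobs : SolObserver I F u X Xh)
    (t : ℝ) :
    cVel I (fun s => Xh s * (X s)⁻¹) t = - gradf (Xh t * (X t)⁻¹) 1 := by
  have herr := cVel_err_r u X Xh hX hobs.1 t
  rw [herr, hobs.2 t, hF]
  set P := Xh t
  set Q := X t
  have hA : TransR I Q⁻¹ P (TransL I P 1 (u t)) = TransL I P Q⁻¹ (TransR I Q⁻¹ 1 (u t)) := by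
    have h := congrArg (fun L : E →L[ℝ] E => L (u t)) (mixed_unit (I := I) P Q⁻¹)
    simp only [ContinuousLinearMap.comp_apply] at h
    exact h.symm
  have hB : TransR I Q⁻¹ P (TransR I Q (P * Q⁻¹) (gradf (P * Q⁻¹) 1)) = gradf (P * Q⁻¹) 1 := by
    have hcmp := compR (I := I) Q⁻¹ Q (P * Q⁻¹)
    rw [mul_inv_cancel, TransR_one, inv_mul_cancel_right] at hcmp
    have h := congrArg (fun L : E →L[ℝ] E => L (gradf (P * Q⁻¹) 1)) hcmp
    simp only [ContinuousLinearMap.comp_apply, ContinuousLinearMap.id_apply] at h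
    exact h.symm
  rw [map_sub, hA, hB]
  abel

lemma suff_right (gradf : G → G → E) (F : G → G → E → ℝ → E)
    (hF : ∀ (Xh Y : G) (w : E) (t : ℝ),
      F Xh Y w t = TransR I Xh 1 w - TransL I Y (Y⁻¹ * Xh) (gradf (Y⁻¹ * Xh) 1))
    (v : ℝ → E) (X Xh : ℝ → G) (hX : SolRightInvSys I v X) (hobs : SolObserver I F v X Xh)
    (t : ℝ) :
    cVel I (fun s => (X s)⁻¹ * Xh s) t = - gradf ((X t)⁻¹ * Xh t) 1 := by
  have herr := cVel_err_l v X Xh hX hobs.1 t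
  rw [herr, hobs.2 t, hF]
  set P := Xh t
  set Q := X t
  have hA : TransL I Q⁻¹ P (TransR I P 1 (v t)) = TransR I P Q⁻¹ (TransL I Q⁻¹ 1 (v t)) := by
    have h := congrArg (fun L : E →L[ℝ] E => L (v t)) (mixed_unit (I := I) Q⁻¹ P)
    simp only [ContinuousLinearMap.comp_apply] at h
    exact h
  have hB : TransL I Q⁻¹ P (TransL I Q (Q⁻¹ * P) (gradf (Q⁻¹ * P) 1)) = gradf (Q⁻¹ * P) 1 := by
    have hcmp := compL (I := I) Q⁻¹ Q (Q⁻¹ * P)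
    rw [inv_mul_cancel, TransL_one, mul_inv_cancel_left] at hcmp
    have h := congrArg (fun L : E →L[ℝ] E => L (gradf (Q⁻¹ * P) 1)) hcmp
    simp only [ContinuousLinearMap.comp_apply, ContinuousLinearMap.id_apply] at h
    exact h.symm
  rw [map_sub, hA, hB]
  abel

end Dev4

section Dev5a
variable {E : Type*} [NormedAddCommGroup E] [NormedSpace ℝ E]
    {H : Type*} [TopologicalSpace H] {I : ModelWithCorners ℝ E H}
    {G : Type*} [TopologicalSpace G] [ChartedSpace H G] [Group G] [LieGroup I (⊤ : ℕ∞) G]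

lemma exists_interior_target_point (x : G) :
    ∃ z : E, z ∈ interior (extChartAt I x).target := by
  have h1 : (extChartAt I x).target ∈ 𝓝[Set.range I] (extChartAt I x x) :=
    extChartAt_target_mem_nhdsWithin x
  rw [mem_nhdsWithin] at h1
  obtain ⟨U, hUo, hxU, hUsub⟩ := h1
  have hmem : (extChartAt I x) x ∈ Set.range I := by
    exact extChartAt_target_subset_range x ((extChartAt I x).map_source (mem_extChartAt_source x))
  have h2 : (extChartAt I x) x ∈ closure (interior (Set.range I)) :=
    I.range_subset_closure_interior hmem
  rw [mem_closure_iff] at h2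
  obtain ⟨z, hzU, hzi⟩ := h2 U hUo hxU
  refine ⟨z, ?_⟩
  have hsub : U ∩ interior (Set.range I) ⊆ (extChartAt I x).target :=
    fun y hy => hUsub ⟨hy.1, interior_subset hy.2⟩
  exact interior_maximal hsub (hUo.inter isOpen_interior) ⟨hzU, hzi⟩

end Dev5a

section Dev5b
variable {E : Type*} [NormedAddCommGroup E] [NormedSpace ℝ E]
    {H : Type*} [TopologicalSpace H] {I : ModelWithCorners ℝ E H}
    {G : Type*} [TopologicalSpace G] [ChartedSpace H G] [Group G] [LieGroup I (⊤ : ℕ∞) G]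

/-- Chart data around an interior point: a point `g`, chart value `z`, and a radius `δ`
such that everything we need happens inside `Metric.ball z δ`. -/
lemma exists_chart_data :
    ∃ (g : G) (z : E) (δ : ℝ), 0 < δ ∧
      (⇑(extChartAt I (1 : G)).symm) z = g ∧
      (⇑(extChartAt I (1 : G))) g = z ∧
      g ∈ (extChartAt I (1 : G)).source ∧
      (∀ y ∈ Metric.ball z δ, y ∈ interior (extChartAt I (1 : G)).target) ∧
      (∀ y q : E, y ∈ Metric.ball z δ → q ∈ Metric.ball z δ →
        (extChartAt I (1 : G)).symm y * g⁻¹ * (extChartAt I (1 : G)).symm q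
          ∈ (extChartAt I (1 : G)).source ∧
        (extChartAt I (1 : G)).symm q * g⁻¹ * (extChartAt I (1 : G)).symm y
          ∈ (extChartAt I (1 : G)).source) := by
  classical
  obtain ⟨z, hzint⟩ := exists_interior_target_point (I := I) (1 : G)
  set x : G := 1 with hx
  have hztar : z ∈ (extChartAt I x).target := interior_subset hzint
  set Ψ : E → G := ⇑(extChartAt I x).symm with hΨdef
  set g : G := Ψ z with hgdef
  have hgsrc : g ∈ (extChartAt I x).source := (extChartAt I x).map_target hztar
  have hφg : (extChartAt I x) g = z := (extChartAt I x).right_inv hztar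
  have hΨat : ∀ y : E, y ∈ interior (extChartAt I x).target → ContMDiffAt 𝓘(ℝ, E) I (⊤ : ℕ∞) Ψ y := by
    intro y hy
    have hnhds : (extChartAt I x).target ∈ 𝓝 y :=
      mem_nhds_iff.mpr ⟨interior (extChartAt I x).target, interior_subset, isOpen_interior, hy⟩
    exact (contMDiffOn_extChartAt_symm x).contMDiffAt hnhds
  have hmulC : Continuous fun pq : G × G => pq.1 * pq.2 := (contMDiff_mul I (⊤ : ℕ∞)).continuous
  have hinvC : Continuous fun y : G => y⁻¹ := (contMDiff_inv I (⊤ : ℕ∞)).continuous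
  have hΨc : ContinuousAt Ψ z := (hΨat z hzint).continuousAt
  have hcont1 : ContinuousAt (fun pq : E × E => Ψ pq.1 * g⁻¹ * Ψ pq.2) (z, z) := by
    have c1 : ContinuousAt (fun pq : E × E => Ψ pq.1) (z, z) := hΨc.comp continuousAt_fst
    have c2 : ContinuousAt (fun pq : E × E => Ψ pq.2) (z, z) := hΨc.comp continuousAt_snd
    have c4 : ContinuousAt (fun pq : E × E => Ψ pq.1 * g⁻¹) (z, z) :=
      hmulC.continuousAt.comp (c1.prodMk continuousAt_const)
    exact hmulC.continuousAt.comp (c4.prodMk c2)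
  have hcont2 : ContinuousAt (fun pq : E × E => Ψ pq.2 * g⁻¹ * Ψ pq.1) (z, z) := by
    have c1 : ContinuousAt (fun pq : E × E => Ψ pq.1) (z, z) := hΨc.comp continuousAt_fst
    have c2 : ContinuousAt (fun pq : E × E => Ψ pq.2) (z, z) := hΨc.comp continuousAt_snd
    have c4 : ContinuousAt (fun pq : E × E => Ψ pq.2 * g⁻¹) (z, z) :=
      hmulC.continuousAt.comp (c2.prodMk continuousAt_const)
    exact hmulC.continuousAt.comp (c4.prodMk c1)
  have hval : Ψ z * g⁻¹ * Ψ z = g := by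
    rw [← hgdef, mul_inv_cancel, one_mul]
  have hopen : IsOpen (extChartAt I x).source := isOpen_extChartAt_source x
  have hSnhds : {pq : E × E | Ψ pq.1 * g⁻¹ * Ψ pq.2 ∈ (extChartAt I x).source} ∩
      {pq : E × E | Ψ pq.2 * g⁻¹ * Ψ pq.1 ∈ (extChartAt I x).source} ∈ 𝓝 ((z, z) : E × E) := by
    refine Filter.inter_mem ?_ ?_
    · exact hcont1.preimage_mem_nhds (hopen.mem_nhds (by rw [hval]; exact hgsrc))
    · exact hcont2.preimage_mem_nhds (hopen.mem_nhds (by rw [hval]; exact hgsrc))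
  obtain ⟨U, hU, V, hV, hUV⟩ := mem_nhds_prod_iff.mp hSnhds
  have hW : U ∩ V ∩ interior (extChartAt I x).target ∈ 𝓝 z :=
    Filter.inter_mem (Filter.inter_mem hU hV) (isOpen_interior.mem_nhds hzint)
  obtain ⟨δ, hδpos, hδsub⟩ := Metric.mem_nhds_iff.mp hW
  refine ⟨g, z, δ, hδpos, rfl, hφg, hgsrc, fun y hy => (hδsub hy).2, ?_⟩
  intro y q hy hq
  have h1 : ((y, q) : E × E) ∈ U ×ˢ V := ⟨(hδsub hy).1.1, (hδsub hq).1.2⟩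
  have h2 : ((q, y) : E × E) ∈ U ×ˢ V := ⟨(hδsub hq).1.1, (hδsub hy).1.2⟩
  exact ⟨(hUV h1).1, (hUV h2).1⟩

end Dev5b

section DevAux
variable {E : Type*} [NormedAddCommGroup E] [NormedSpace ℝ E]
    {F : Type*} [NormedAddCommGroup F] [NormedSpace ℝ F]

lemma clm_comp_inr (L : E × ℝ →L[ℝ] F) :
    L.comp (ContinuousLinearMap.inr ℝ E ℝ)
      = ContinuousLinearMap.smulRight (1 : ℝ →L[ℝ] ℝ) (L ((0 : E), (1 : ℝ))) := by
  refine ContinuousLinearMap.ext fun s => ?_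
  simp only [ContinuousLinearMap.comp_apply, ContinuousLinearMap.inr_apply,
    ContinuousLinearMap.smulRight_apply, ContinuousLinearMap.one_apply]
  rw [show ((0 : E), s) = s • (((0 : E), (1 : ℝ)) : E × ℝ) by simp, map_smul]

end DevAux

section Dev5c
variable {E : Type*} [NormedAddCommGroup E] [NormedSpace ℝ E]
    {H : Type*} [TopologicalSpace H] {I : ModelWithCorners ℝ E H}
    {G : Type*} [TopologicalSpace G] [ChartedSpace H G] [Group G] [LieGroup I (⊤ : ℕ∞) G]

lemma exists_sol_left [FiniteDimensional ℝ E] (t₀ : ℝ) (Y : G) (w : E) :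
    ∃ (u : ℝ → E) (X : ℝ → G), ContDiff ℝ (⊤ : ℕ∞) u ∧ SolLeftInvSys I u X ∧ X t₀ = Y ∧ u t₀ = w := by
  classical
  obtain ⟨g, z, δ, hδpos, hgdef, hφg, hgsrc, hball_int, hball_cond⟩ := exists_chart_data (I := I) (G := G)
  set x : G := (1 : G) with hx
  set Ψ : E → G := ⇑(extChartAt I x).symm with hΨdef
  set φ : G → E := ⇑(extChartAt I x) with hφdef
  have hzball : z ∈ Metric.ball z δ := Metric.mem_ball_self hδpos
  have hΨat : ∀ y ∈ Metric.ball z δ, ContMDiffAt 𝓘(ℝ, E) I (⊤ : ℕ∞) Ψ y := by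
    intro y hy
    have hnhds : (extChartAt I x).target ∈ 𝓝 y :=
      mem_nhds_iff.mpr ⟨interior (extChartAt I x).target, interior_subset, isOpen_interior,
        hball_int y hy⟩
    exact (contMDiffOn_extChartAt_symm x).contMDiffAt hnhds
  have hΨsrc : ∀ y ∈ Metric.ball z δ, Ψ y ∈ (extChartAt I x).source :=
    fun y hy => (extChartAt I x).map_target (interior_subset (hball_int y hy))
  have hφΨ : ∀ y ∈ Metric.ball z δ, φ (Ψ y) = y :=
    fun y hy => (extChartAt I x).right_inv (interior_subset (hball_int y hy))
  have hopen : IsOpen (extChartAt I x).source := isOpen_extChartAt_source x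
  -- derivative of the inverse chart inverts the derivative of the chart
  have hAinv : ∀ y ∈ Metric.ball z δ, ∀ v : E,
      (mfderiv 𝓘(ℝ, E) I Ψ y) (mfderiv I 𝓘(ℝ, E) φ (Ψ y) v) = v := by
    intro y hy v
    have hsrc := hΨsrc y hy
    have hsrc' : Ψ y ∈ (chartAt H x).source := by rwa [extChartAt_source] at hsrc
    have hEq : (fun q : G => Ψ (φ q)) =ᶠ[𝓝 (Ψ y)] id := by
      filter_upwards [hopen.mem_nhds hsrc] with q hq
      exact (extChartAt I x).left_inv hq
    have hid : mfderiv I I (fun q : G => Ψ (φ q)) (Ψ y) = ContinuousLinearMap.id ℝ E := by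
      rw [hEq.mfderiv_eq, mfderiv_id]; rfl
    have hΨd : MDifferentiableAt 𝓘(ℝ, E) I Ψ (φ (Ψ y)) := by
      rw [hφΨ y hy]; exact (hΨat y hy).mdifferentiableAt top_ne0
    have hφd : MDifferentiableAt I 𝓘(ℝ, E) φ (Ψ y) :=
      (contMDiffAt_extChartAt' hsrc').mdifferentiableAt top_ne0
    have hcomp : mfderiv I I (fun q : G => Ψ (φ q)) (Ψ y)
        = (mfderiv 𝓘(ℝ, E) I Ψ y).comp (mfderiv I 𝓘(ℝ, E) φ (Ψ y)) := by
      have heq : (fun q : G => Ψ (φ q)) = Ψ ∘ φ := rfl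
      rw [heq, mfderiv_comp (Ψ y) hΨd hφd, hφΨ y hy]
    have := congrArg (fun L : E →L[ℝ] E => L v) (hcomp.symm.trans hid)
    exact this
  -- the tangent vector in the chart
  set wg : E := TransL I g 1 w with hwgdef
  set wh : E := mfderiv I 𝓘(ℝ, E) φ g wg with hwhdef
  set s₀ : ℝ := δ / (‖wh‖ + 1) with hs₀def
  have hs₀pos : 0 < s₀ := by positivity
  have hline : ∀ s : ℝ, |s| < s₀ → z + s • wh ∈ Metric.ball z δ := by
    intro s hs
    rw [Metric.mem_ball, dist_eq_norm]
    have h0 : z + s • wh - z = s • wh := by abel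
    rw [h0, norm_smul, Real.norm_eq_abs]
    rcases eq_or_ne wh 0 with h | h
    · simp [h]; positivity
    · have h1 : |s| * ‖wh‖ < s₀ * (‖wh‖ + 1) := by
        have := norm_nonneg wh
        have habs := abs_nonneg s
        nlinarith
      have h2 : s₀ * (‖wh‖ + 1) = δ := by
        rw [hs₀def]; field_simp
      linarith
  -- the local multiplication in charts
  set B : E × ℝ → E := fun q => φ (Ψ q.1 * g⁻¹ * Ψ (z + q.2 • wh)) with hBdef
  set O : Set (E × ℝ) := (Metric.ball z δ) ×ˢ (Metric.ball (0 : ℝ) s₀) with hOdef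
  have hOopen : IsOpen O := Metric.isOpen_ball.prod Metric.isOpen_ball
  have hBsm : ContDiffOn ℝ (⊤ : ℕ∞) B O := by
    intro q hq
    have hq1 : q.1 ∈ Metric.ball z δ := hq.1
    have hq2 : z + q.2 • wh ∈ Metric.ball z δ := by
      apply hline
      have := hq.2
      rwa [Metric.mem_ball, Real.dist_eq, sub_zero] at this
    have hlin : ContDiff ℝ (⊤ : ℕ∞) (fun q : E × ℝ => z + q.2 • wh) :=
      contDiff_const.add (contDiff_snd.smul contDiff_const)
    have c1 : ContMDiffAt 𝓘(ℝ, E × ℝ) I (⊤ : ℕ∞) (fun q : E × ℝ => Ψ q.1) q :=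
      (hΨat _ hq1).comp q (contMDiff_iff_contDiff.mpr contDiff_fst).contMDiffAt
    have c2 : ContMDiffAt 𝓘(ℝ, E × ℝ) I (⊤ : ℕ∞) (fun q : E × ℝ => Ψ (z + q.2 • wh)) q :=
      (hΨat _ hq2).comp q (contMDiff_iff_contDiff.mpr hlin).contMDiffAt
    have c3 : ContMDiffAt 𝓘(ℝ, E × ℝ) I (⊤ : ℕ∞)
        (fun q : E × ℝ => Ψ q.1 * g⁻¹ * Ψ (z + q.2 • wh)) q :=
      (c1.mul contMDiffAt_const).mul c2
    have hsrc : Ψ q.1 * g⁻¹ * Ψ (z + q.2 • wh) ∈ (chartAt H x).source := by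
      have := (hball_cond q.1 (z + q.2 • wh) hq1 hq2).1
      rwa [extChartAt_source] at this
    have c4 : ContMDiffAt I 𝓘(ℝ, E) (⊤ : ℕ∞) φ (Ψ q.1 * g⁻¹ * Ψ (z + q.2 • wh)) :=
      contMDiffAt_extChartAt' hsrc
    have c5 : ContMDiffAt 𝓘(ℝ, E × ℝ) 𝓘(ℝ, E) (⊤ : ℕ∞) B q := c4.comp q c3
    exact (contMDiffAt_iff_contDiffAt.mp c5).contDiffWithinAt
  set Vt : E → E := fun y => fderiv ℝ B (y, 0) ((0 : E), (1 : ℝ)) with hVtdef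
  have hVsm : ContDiffOn ℝ (⊤ : ℕ∞) Vt (Metric.ball z δ) := by
    have hfd := ((contDiffOn_infty_iff_fderiv_of_isOpen hOopen).mp hBsm).2
    have h1 : ContDiffOn ℝ (⊤ : ℕ∞) (fun y : E => fderiv ℝ B (y, 0)) (Metric.ball z δ) := by
      refine hfd.comp ((contDiff_id.prodMk contDiff_const).contDiffOn) ?_
      intro y hy
      exact ⟨hy, Metric.mem_ball_self hs₀pos⟩
    exact h1.clm_apply contDiffOn_const
  -- key identity for the chart vector field
  have hVkey : ∀ y ∈ Metric.ball z δ, (mfderiv 𝓘(ℝ, E) I Ψ y) (Vt y) = TransL I (Ψ y) 1 w := by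
    intro y hy
    have hB0 : B (y, 0) = y := by
      rw [hBdef]
      simp only [zero_smul, add_zero]
      rw [hgdef, inv_mul_cancel_right, hφΨ y hy]
    have hmemO : ((y, 0) : E × ℝ) ∈ O := ⟨hy, Metric.mem_ball_self hs₀pos⟩
    have hBd : HasFDerivAt B (fderiv ℝ B (y, 0)) (y, 0) := by
      have h1 : ContDiffAt ℝ (⊤ : ℕ∞) B (y, 0) :=
        (hBsm (y, 0) hmemO).contDiffAt (hOopen.mem_nhds hmemO)
      exact (h1.differentiableAt top_ne0).hasFDerivAt
    have step1 : HasMFDerivAt 𝓘(ℝ) 𝓘(ℝ, E) (fun s : ℝ => B (y, s)) 0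
        (ContinuousLinearMap.smulRight (1 : ℝ →L[ℝ] ℝ) (Vt y)) := by
      rw [hasMFDerivAt_iff_hasFDerivAt]
      have h2 := hBd.comp 0 (hasFDerivAt_prodMk_right y (0 : ℝ))
      convert h2 using 1
      rw [clm_comp_inr (fderiv ℝ B (y, 0))]
      exact Iff.rfl
    have hΨyd : MDifferentiableAt 𝓘(ℝ, E) I Ψ (B (y, 0)) := by
      rw [hB0]; exact (hΨat y hy).mdifferentiableAt top_ne0
    have step2 : HasMFDerivAt 𝓘(ℝ) I (fun s : ℝ => Ψ (B (y, s))) 0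
        ((mfderiv 𝓘(ℝ, E) I Ψ y).comp
          (ContinuousLinearMap.smulRight (1 : ℝ →L[ℝ] ℝ) (Vt y))) := by
      have h3 := hΨyd.hasMFDerivAt.comp 0 step1
      rw [hB0] at h3
      exact h3
    have step3 : (fun s : ℝ => Ψ (B (y, s))) =ᶠ[𝓝 (0 : ℝ)]
        (fun s : ℝ => (Ψ y * g⁻¹) * Ψ (z + s • wh)) := by
      have hball0 : Metric.ball (0 : ℝ) s₀ ∈ 𝓝 (0 : ℝ) :=
        Metric.ball_mem_nhds _ hs₀pos
      filter_upwards [hball0] with s hs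
      have hs' : z + s • wh ∈ Metric.ball z δ := by
        apply hline
        rwa [Metric.mem_ball, Real.dist_eq, sub_zero] at hs
      have hsrc := (hball_cond y (z + s • wh) hy hs').1
      exact (extChartAt I x).left_inv hsrc
    have step4 : HasMFDerivAt 𝓘(ℝ) I (fun s : ℝ => (Ψ y * g⁻¹) * Ψ (z + s • wh)) 0
        ((mfderiv 𝓘(ℝ, E) I Ψ y).comp
          (ContinuousLinearMap.smulRight (1 : ℝ →L[ℝ] ℝ) (Vt y))) :=
      step2.congr_of_eventuallyEq step3.symm
    have hval1 : cVel I (fun s : ℝ => (Ψ y * g⁻¹) * Ψ (z + s • wh)) 0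
        = (mfderiv 𝓘(ℝ, E) I Ψ y) (Vt y) := by
      rw [cVel, step4.mfderiv]
      show (mfderiv 𝓘(ℝ, E) I Ψ y) ((1 : ℝ) • (Vt y)) = (mfderiv 𝓘(ℝ, E) I Ψ y) (Vt y)
      rw [one_smul]
    -- the other computation of the same velocity
    have hlined : HasMFDerivAt 𝓘(ℝ) 𝓘(ℝ, E) (fun s : ℝ => z + s • wh) 0
        (ContinuousLinearMap.smulRight (1 : ℝ →L[ℝ] ℝ) wh) := by
      rw [hasMFDerivAt_iff_hasFDerivAt]
      have h1 : HasDerivAt (fun s : ℝ => z + s • wh) wh 0 := by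
        simpa using ((hasDerivAt_id (0 : ℝ)).smul_const wh).const_add z
      rwa [hasDerivAt_iff_hasFDerivAt] at h1
    have hcz : HasMFDerivAt 𝓘(ℝ) I (fun s : ℝ => Ψ (z + s • wh)) 0
        ((mfderiv 𝓘(ℝ, E) I Ψ z).comp
          (ContinuousLinearMap.smulRight (1 : ℝ →L[ℝ] ℝ) wh)) := by
      have h1 : MDifferentiableAt 𝓘(ℝ, E) I Ψ ((fun s : ℝ => z + s • wh) 0) := by
        simp only [zero_smul, add_zero]
        exact (hΨat z hzball).mdifferentiableAt top_ne0
      have h2 := h1.hasMFDerivAt.comp 0 hlined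
      have h3 : ((fun s : ℝ => z + s • wh) 0) = z := by simp
      rw [h3] at h2
      exact h2
    have hczvel : cVel I (fun s : ℝ => Ψ (z + s • wh)) 0 = wg := by
      rw [cVel, hcz.mfderiv]
      show (mfderiv 𝓘(ℝ, E) I Ψ z) ((1 : ℝ) • wh) = wg
      rw [one_smul, hwhdef]
      have := hAinv z hzball wg
      rw [hgdef] at this
      exact this
    have hval2 : cVel I (fun s : ℝ => (Ψ y * g⁻¹) * Ψ (z + s • wh)) 0
        = TransL I (Ψ y * g⁻¹) g wg := by
      have h1 := cVel_lmul (Ψ y * g⁻¹) (fun s : ℝ => Ψ (z + s • wh)) 0 hcz.mdifferentiableAt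
      rw [h1, hczvel]
      congr 1
      simp only [zero_smul, add_zero]
      rw [hgdef]
    have hfin : TransL I (Ψ y * g⁻¹) g wg = TransL I (Ψ y) 1 w := by
      rw [hwgdef]
      have hcmp := compL (I := I) (Ψ y * g⁻¹) g 1
      rw [inv_mul_cancel_right, mul_one] at hcmp
      have := congrArg (fun L : E →L[ℝ] E => L w) hcmp
      simp only [ContinuousLinearMap.comp_apply] at this
      exact this.symm
    rw [← hval1, hval2, hfin]
  -- solve the ODE in the chart
  have hV1 : ContDiffAt ℝ 1 Vt z := by
    have h1 : ContDiffAt ℝ (⊤ : ℕ∞) Vt z :=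
      (hVsm z hzball).contDiffAt (Metric.isOpen_ball.mem_nhds hzball)
    exact h1.of_le (by exact_mod_cast le_top)
  obtain ⟨f, hf0, ε₀, hε₀, hode⟩ :=
    hV1.exists_forall_mem_closedBall_exists_eq_forall_mem_Ioo_hasDerivAt₀ (0 : ℝ)
  have h0mem : (0 : ℝ) ∈ Set.Ioo (0 - ε₀) (0 + ε₀) := by constructor <;> linarith
  have hcf : ContinuousAt f 0 := (hode 0 h0mem).continuousAt
  obtain ⟨ε₁, hε₁pos, hε₁⟩ := Metric.continuousAt_iff.mp hcf δ hδpos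
  set τ : ℝ := min ε₀ ε₁ with hτdef
  have hτpos : 0 < τ := lt_min hε₀ hε₁pos
  set S : Set ℝ := Set.Ioo (-τ) τ with hSdef
  have hSopen : IsOpen S := isOpen_Ioo
  have hfS : ∀ s ∈ S, HasDerivAt f (Vt (f s)) s := by
    intro s hs
    apply hode
    constructor
    · have := hs.1; have h2 : τ ≤ ε₀ := min_le_left _ _; linarith
    · have := hs.2; have h2 : τ ≤ ε₀ := min_le_left _ _; linarith
  have hfball : ∀ s ∈ S, f s ∈ Metric.ball z δ := by
    intro s hs
    have h1 : dist s 0 < ε₁ := by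
      rw [Real.dist_eq, sub_zero]
      have h2 : τ ≤ ε₁ := min_le_right _ _
      rw [abs_lt]
      exact ⟨by linarith [hs.1], by linarith [hs.2]⟩
    have h2 := hε₁ h1
    rw [hf0] at h2
    exact Metric.mem_ball.mpr h2
  -- bootstrap smoothness of the solution
  have hboot : ∀ n : ℕ, ContDiffOn ℝ n f S := by
    intro n
    induction n with
    | zero => exact contDiffOn_zero.mpr fun s hs => (hfS s hs).continuousAt.continuousWithinAt
    | succ n ih =>
      have hcast : ((n + 1 : ℕ) : WithTop ℕ∞) = (n : WithTop ℕ∞) + 1 := by push_cast; rfl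
      rw [hcast, contDiffOn_succ_iff_deriv_of_isOpen hSopen]
      refine ⟨fun s hs => (hfS s hs).differentiableAt.differentiableWithinAt, ?_, ?_⟩
      · intro hω
        exact absurd hω (by simp)
      · have hcomp : ContDiffOn ℝ n (fun s => Vt (f s)) S :=
          (hVsm.of_le (by exact_mod_cast le_top)).comp ih fun s hs => hfball s hs
        exact hcomp.congr fun s hs => (hfS s hs).deriv
  have hfsm : ContDiffOn ℝ (⊤ : ℕ∞) f S := contDiffOn_infty.mpr hboot
  -- the analytic time change
  set K : ℝ := 2 / τ with hKdef
  have hKpos : 0 < K := by positivity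
  set σ : ℝ → ℝ := fun t => K⁻¹ * Real.sin (K * (t - t₀)) with hσdef
  set η : ℝ → ℝ := fun t => Real.cos (K * (t - t₀)) with hηdef
  have hσ0 : σ t₀ = 0 := by simp [hσdef]
  have hη0 : η t₀ = 1 := by simp [hηdef]
  have hσS : ∀ t, σ t ∈ S := by
    intro t
    have h1 : |σ t| ≤ K⁻¹ := by
      rw [hσdef]
      simp only []
      rw [abs_mul, abs_of_pos (inv_pos.mpr hKpos)]
      have h2 : |Real.sin (K * (t - t₀))| ≤ 1 :=
        abs_le.mpr ⟨Real.neg_one_le_sin _, Real.sin_le_one _⟩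
      nlinarith [inv_pos.mpr hKpos]
    have h3 : K⁻¹ = τ / 2 := by rw [hKdef]; field_simp
    rw [h3] at h1
    rw [abs_le] at h1
    exact ⟨by linarith [h1.1], by linarith [h1.2]⟩
  have hσd : ∀ t, HasDerivAt σ (η t) t := by
    intro t
    have h1 : HasDerivAt (fun s : ℝ => K * (s - t₀)) K t := by
      simpa using ((hasDerivAt_id t).sub_const t₀).const_mul K
    have h2 := (Real.hasDerivAt_sin (K * (t - t₀))).comp t h1
    have h3 := h2.const_mul K⁻¹
    refine h3.congr_deriv ?_
    rw [hηdef]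
    field_simp
  have hσsm : ContDiff ℝ (⊤ : ℕ∞) σ :=
    contDiff_const.mul (Real.contDiff_sin.comp (contDiff_const.mul (contDiff_id.sub contDiff_const)))
  -- the solution and the input
  set a : G := Y * g⁻¹ with hadef
  set X : ℝ → G := fun t => a * Ψ (f (σ t)) with hXdef
  set u : ℝ → E := fun t => η t • w with hudef
  have hu : ContDiff ℝ (⊤ : ℕ∞) u :=
    (Real.contDiff_cos.comp (contDiff_const.mul (contDiff_id.sub contDiff_const))).smul
      contDiff_const
  have hXsm : ContMDiff 𝓘(ℝ) I (⊤ : ℕ∞) X := by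
    intro t
    have m1 : ContMDiffAt 𝓘(ℝ) 𝓘(ℝ) (⊤ : ℕ∞) σ t := (contMDiff_iff_contDiff.mpr hσsm).contMDiffAt
    have m2 : ContMDiffAt 𝓘(ℝ) 𝓘(ℝ, E) (⊤ : ℕ∞) f (σ t) := by
      have h1 : ContDiffAt ℝ (⊤ : ℕ∞) f (σ t) :=
        (hfsm (σ t) (hσS t)).contDiffAt (hSopen.mem_nhds (hσS t))
      exact contMDiffAt_iff_contDiffAt.mpr h1
    have m3 : ContMDiffAt 𝓘(ℝ, E) I (⊤ : ℕ∞) Ψ (f (σ t)) := hΨat _ (hfball _ (hσS t))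
    have m4 : ContMDiffAt I I (⊤ : ℕ∞) (fun q : G => a * q) (Ψ (f (σ t))) :=
      contMDiff_mul_left.contMDiffAt
    exact m4.comp t ((m3.comp t (m2.comp t m1)))
  have hsol : ∀ t, cVel I X t = TransL I (X t) 1 (u t) := by
    intro t
    have hsS := hσS t
    have hfb := hfball _ hsS
    have h1 : HasDerivAt (fun t' : ℝ => f (σ t')) (η t • Vt (f (σ t))) t :=
      (hfS _ hsS).scomp t (hσd t)
    have h1' : HasMFDerivAt 𝓘(ℝ) 𝓘(ℝ, E) (fun t' : ℝ => f (σ t')) t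
        (ContinuousLinearMap.smulRight (1 : ℝ →L[ℝ] ℝ) (η t • Vt (f (σ t)))) := by
      rw [hasMFDerivAt_iff_hasFDerivAt]
      rwa [hasDerivAt_iff_hasFDerivAt] at h1
    have h2 : HasMFDerivAt 𝓘(ℝ) I (fun t' : ℝ => Ψ (f (σ t'))) t
        ((mfderiv 𝓘(ℝ, E) I Ψ (f (σ t))).comp
          (ContinuousLinearMap.smulRight (1 : ℝ →L[ℝ] ℝ) (η t • Vt (f (σ t))))) :=
      ((hΨat _ hfb).mdifferentiableAt top_ne0).hasMFDerivAt.comp t h1'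
    have h3 : HasMFDerivAt I I (fun q : G => a * q) (Ψ (f (σ t)))
        (mfderiv I I (fun q : G => a * q) (Ψ (f (σ t)))) :=
      (mdiffL a (Ψ (f (σ t)))).hasMFDerivAt
    have h4 : HasMFDerivAt 𝓘(ℝ) I X t
        ((mfderiv I I (fun q : G => a * q) (Ψ (f (σ t)))).comp
          ((mfderiv 𝓘(ℝ, E) I Ψ (f (σ t))).comp
            (ContinuousLinearMap.smulRight (1 : ℝ →L[ℝ] ℝ) (η t • Vt (f (σ t)))))) :=
      h3.comp t h2
    have h5 : cVel I X t = TransL I a (Ψ (f (σ t)))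
        ((mfderiv 𝓘(ℝ, E) I Ψ (f (σ t))) (η t • Vt (f (σ t)))) := by
      rw [cVel, h4.mfderiv]
      show (TransL I a (Ψ (f (σ t))))
          ((mfderiv 𝓘(ℝ, E) I Ψ (f (σ t))) ((1 : ℝ) • (η t • Vt (f (σ t)))))
        = TransL I a (Ψ (f (σ t))) ((mfderiv 𝓘(ℝ, E) I Ψ (f (σ t))) (η t • Vt (f (σ t))))
      rw [one_smul]
    have hsm : TransL I a (Ψ (f (σ t))) ((mfderiv 𝓘(ℝ, E) I Ψ (f (σ t))) (η t • Vt (f (σ t))))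
        = η t • TransL I a (Ψ (f (σ t))) ((mfderiv 𝓘(ℝ, E) I Ψ (f (σ t))) (Vt (f (σ t)))) :=
      (congrArg (TransL I a (Ψ (f (σ t)))) (map_smul (mfderiv 𝓘(ℝ, E) I Ψ (f (σ t))) (η t) (Vt (f (σ t))))).trans (map_smul _ _ _)
    rw [h5, hsm, hVkey _ hfb]
    have h6 : TransL I a (Ψ (f (σ t))) (TransL I (Ψ (f (σ t))) 1 w)
        = TransL I (a * Ψ (f (σ t))) 1 w := by
      have hcmp := compL (I := I) a (Ψ (f (σ t))) 1
      rw [mul_one] at hcmp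
      have := congrArg (fun L : E →L[ℝ] E => L w) hcmp
      simp only [ContinuousLinearMap.comp_apply] at this
      exact this.symm
    rw [h6, hudef, hXdef]
    simp only [map_smul]
  have hX0 : X t₀ = Y := by
    rw [hXdef]
    simp only [hσ0]
    rw [hf0, hgdef, hadef, inv_mul_cancel_right]
  have hu0 : u t₀ = w := by rw [hudef]; simp [hη0]
  exact ⟨u, X, hu, ⟨hXsm, hsol⟩, hX0, hu0⟩

end Dev5c

section Dev5d
variable {E : Type*} [NormedAddCommGroup E] [NormedSpace ℝ E]
    {H : Type*} [TopologicalSpace H] {I : ModelWithCorners ℝ E H}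
    {G : Type*} [TopologicalSpace G] [ChartedSpace H G] [Group G] [LieGroup I (⊤ : ℕ∞) G]

lemma exists_sol_right [FiniteDimensional ℝ E] (t₀ : ℝ) (Y : G) (w : E) :
    ∃ (u : ℝ → E) (X : ℝ → G), ContDiff ℝ (⊤ : ℕ∞) u ∧ SolRightInvSys I u X ∧ X t₀ = Y ∧ u t₀ = w := by
  classical
  obtain ⟨g, z, δ, hδpos, hgdef, hφg, hgsrc, hball_int, hball_cond⟩ := exists_chart_data (I := I) (G := G)
  set x : G := (1 : G) with hx
  set Ψ : E → G := ⇑(extChartAt I x).symm with hΨdef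
  set φ : G → E := ⇑(extChartAt I x) with hφdef
  have hzball : z ∈ Metric.ball z δ := Metric.mem_ball_self hδpos
  have hΨat : ∀ y ∈ Metric.ball z δ, ContMDiffAt 𝓘(ℝ, E) I (⊤ : ℕ∞) Ψ y := by
    intro y hy
    have hnhds : (extChartAt I x).target ∈ 𝓝 y :=
      mem_nhds_iff.mpr ⟨interior (extChartAt I x).target, interior_subset, isOpen_interior,
        hball_int y hy⟩
    exact (contMDiffOn_extChartAt_symm x).contMDiffAt hnhds
  have hΨsrc : ∀ y ∈ Metric.ball z δ, Ψ y ∈ (extChartAt I x).source :=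
    fun y hy => (extChartAt I x).map_target (interior_subset (hball_int y hy))
  have hφΨ : ∀ y ∈ Metric.ball z δ, φ (Ψ y) = y :=
    fun y hy => (extChartAt I x).right_inv (interior_subset (hball_int y hy))
  have hopen : IsOpen (extChartAt I x).source := isOpen_extChartAt_source x
  -- derivative of the inverse chart inverts the derivative of the chart
  have hAinv : ∀ y ∈ Metric.ball z δ, ∀ v : E,
      (mfderiv 𝓘(ℝ, E) I Ψ y) (mfderiv I 𝓘(ℝ, E) φ (Ψ y) v) = v := by
    intro y hy v
    have hsrc := hΨsrc y hy
    have hsrc' : Ψ y ∈ (chartAt H x).source := by rwa [extChartAt_source] at hsrc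
    have hEq : (fun q : G => Ψ (φ q)) =ᶠ[𝓝 (Ψ y)] id := by
      filter_upwards [hopen.mem_nhds hsrc] with q hq
      exact (extChartAt I x).left_inv hq
    have hid : mfderiv I I (fun q : G => Ψ (φ q)) (Ψ y) = ContinuousLinearMap.id ℝ E := by
      rw [hEq.mfderiv_eq, mfderiv_id]; rfl
    have hΨd : MDifferentiableAt 𝓘(ℝ, E) I Ψ (φ (Ψ y)) := by
      rw [hφΨ y hy]; exact (hΨat y hy).mdifferentiableAt top_ne0
    have hφd : MDifferentiableAt I 𝓘(ℝ, E) φ (Ψ y) :=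
      (contMDiffAt_extChartAt' hsrc').mdifferentiableAt top_ne0
    have hcomp : mfderiv I I (fun q : G => Ψ (φ q)) (Ψ y)
        = (mfderiv 𝓘(ℝ, E) I Ψ y).comp (mfderiv I 𝓘(ℝ, E) φ (Ψ y)) := by
      have heq : (fun q : G => Ψ (φ q)) = Ψ ∘ φ := rfl
      rw [heq, mfderiv_comp (Ψ y) hΨd hφd, hφΨ y hy]
    have := congrArg (fun L : E →L[ℝ] E => L v) (hcomp.symm.trans hid)
    exact this
  -- the tangent vector in the chart
  set wg : E := TransR I g 1 w with hwgdef
  set wh : E := mfderiv I 𝓘(ℝ, E) φ g wg with hwhdef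
  set s₀ : ℝ := δ / (‖wh‖ + 1) with hs₀def
  have hs₀pos : 0 < s₀ := by positivity
  have hline : ∀ s : ℝ, |s| < s₀ → z + s • wh ∈ Metric.ball z δ := by
    intro s hs
    rw [Metric.mem_ball, dist_eq_norm]
    have h0 : z + s • wh - z = s • wh := by abel
    rw [h0, norm_smul, Real.norm_eq_abs]
    rcases eq_or_ne wh 0 with h | h
    · simp [h]; positivity
    · have h1 : |s| * ‖wh‖ < s₀ * (‖wh‖ + 1) := by
        have := norm_nonneg wh
        have habs := abs_nonneg s
        nlinarith
      have h2 : s₀ * (‖wh‖ + 1) = δ := by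
        rw [hs₀def]; field_simp
      linarith
  -- the local multiplication in charts
  set B : E × ℝ → E := fun q => φ (Ψ (z + q.2 • wh) * g⁻¹ * Ψ q.1) with hBdef
  set O : Set (E × ℝ) := (Metric.ball z δ) ×ˢ (Metric.ball (0 : ℝ) s₀) with hOdef
  have hOopen : IsOpen O := Metric.isOpen_ball.prod Metric.isOpen_ball
  have hBsm : ContDiffOn ℝ (⊤ : ℕ∞) B O := by
    intro q hq
    have hq1 : q.1 ∈ Metric.ball z δ := hq.1
    have hq2 : z + q.2 • wh ∈ Metric.ball z δ := by
      apply hline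
      have := hq.2
      rwa [Metric.mem_ball, Real.dist_eq, sub_zero] at this
    have hlin : ContDiff ℝ (⊤ : ℕ∞) (fun q : E × ℝ => z + q.2 • wh) :=
      contDiff_const.add (contDiff_snd.smul contDiff_const)
    have c1 : ContMDiffAt 𝓘(ℝ, E × ℝ) I (⊤ : ℕ∞) (fun q : E × ℝ => Ψ q.1) q :=
      (hΨat _ hq1).comp q (contMDiff_iff_contDiff.mpr contDiff_fst).contMDiffAt
    have c2 : ContMDiffAt 𝓘(ℝ, E × ℝ) I (⊤ : ℕ∞) (fun q : E × ℝ => Ψ (z + q.2 • wh)) q :=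
      (hΨat _ hq2).comp q (contMDiff_iff_contDiff.mpr hlin).contMDiffAt
    have c3 : ContMDiffAt 𝓘(ℝ, E × ℝ) I (⊤ : ℕ∞)
        (fun q : E × ℝ => Ψ (z + q.2 • wh) * g⁻¹ * Ψ q.1) q :=
      (c2.mul contMDiffAt_const).mul c1
    have hsrc : Ψ (z + q.2 • wh) * g⁻¹ * Ψ q.1 ∈ (chartAt H x).source := by
      have := (hball_cond q.1 (z + q.2 • wh) hq1 hq2).2
      rwa [extChartAt_source] at this
    have c4 : ContMDiffAt I 𝓘(ℝ, E) (⊤ : ℕ∞) φ (Ψ (z + q.2 • wh) * g⁻¹ * Ψ q.1) :=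
      contMDiffAt_extChartAt' hsrc
    have c5 : ContMDiffAt 𝓘(ℝ, E × ℝ) 𝓘(ℝ, E) (⊤ : ℕ∞) B q := c4.comp q c3
    exact (contMDiffAt_iff_contDiffAt.mp c5).contDiffWithinAt
  set Vt : E → E := fun y => fderiv ℝ B (y, 0) ((0 : E), (1 : ℝ)) with hVtdef
  have hVsm : ContDiffOn ℝ (⊤ : ℕ∞) Vt (Metric.ball z δ) := by
    have hfd := ((contDiffOn_infty_iff_fderiv_of_isOpen hOopen).mp hBsm).2
    have h1 : ContDiffOn ℝ (⊤ : ℕ∞) (fun y : E => fderiv ℝ B (y, 0)) (Metric.ball z δ) := by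
      refine hfd.comp ((contDiff_id.prodMk contDiff_const).contDiffOn) ?_
      intro y hy
      exact ⟨hy, Metric.mem_ball_self hs₀pos⟩
    exact h1.clm_apply contDiffOn_const
  -- key identity for the chart vector field
  have hVkey : ∀ y ∈ Metric.ball z δ, (mfderiv 𝓘(ℝ, E) I Ψ y) (Vt y) = TransR I (Ψ y) 1 w := by
    intro y hy
    have hB0 : B (y, 0) = y := by
      rw [hBdef]
      simp only [zero_smul, add_zero]
      rw [hgdef, mul_inv_cancel, one_mul, hφΨ y hy]
    have hmemO : ((y, 0) : E × ℝ) ∈ O := ⟨hy, Metric.mem_ball_self hs₀pos⟩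
    have hBd : HasFDerivAt B (fderiv ℝ B (y, 0)) (y, 0) := by
      have h1 : ContDiffAt ℝ (⊤ : ℕ∞) B (y, 0) :=
        (hBsm (y, 0) hmemO).contDiffAt (hOopen.mem_nhds hmemO)
      exact (h1.differentiableAt top_ne0).hasFDerivAt
    have step1 : HasMFDerivAt 𝓘(ℝ) 𝓘(ℝ, E) (fun s : ℝ => B (y, s)) 0
        (ContinuousLinearMap.smulRight (1 : ℝ →L[ℝ] ℝ) (Vt y)) := by
      rw [hasMFDerivAt_iff_hasFDerivAt]
      have h2 := hBd.comp 0 (hasFDerivAt_prodMk_right y (0 : ℝ))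
      convert h2 using 1
      rw [clm_comp_inr (fderiv ℝ B (y, 0))]
      exact Iff.rfl
    have hΨyd : MDifferentiableAt 𝓘(ℝ, E) I Ψ (B (y, 0)) := by
      rw [hB0]; exact (hΨat y hy).mdifferentiableAt top_ne0
    have step2 : HasMFDerivAt 𝓘(ℝ) I (fun s : ℝ => Ψ (B (y, s))) 0
        ((mfderiv 𝓘(ℝ, E) I Ψ y).comp
          (ContinuousLinearMap.smulRight (1 : ℝ →L[ℝ] ℝ) (Vt y))) := by
      have h3 := hΨyd.hasMFDerivAt.comp 0 step1
      rw [hB0] at h3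
      exact h3
    have step3 : (fun s : ℝ => Ψ (B (y, s))) =ᶠ[𝓝 (0 : ℝ)]
        (fun s : ℝ => Ψ (z + s • wh) * g⁻¹ * Ψ y) := by
      have hball0 : Metric.ball (0 : ℝ) s₀ ∈ 𝓝 (0 : ℝ) :=
        Metric.ball_mem_nhds _ hs₀pos
      filter_upwards [hball0] with s hs
      have hs' : z + s • wh ∈ Metric.ball z δ := by
        apply hline
        rwa [Metric.mem_ball, Real.dist_eq, sub_zero] at hs
      have hsrc := (hball_cond y (z + s • wh) hy hs').2
      exact (extChartAt I x).left_inv hsrc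
    have step4 : HasMFDerivAt 𝓘(ℝ) I (fun s : ℝ => Ψ (z + s • wh) * g⁻¹ * Ψ y) 0
        ((mfderiv 𝓘(ℝ, E) I Ψ y).comp
          (ContinuousLinearMap.smulRight (1 : ℝ →L[ℝ] ℝ) (Vt y))) :=
      step2.congr_of_eventuallyEq step3.symm
    have hval1 : cVel I (fun s : ℝ => Ψ (z + s • wh) * g⁻¹ * Ψ y) 0
        = (mfderiv 𝓘(ℝ, E) I Ψ y) (Vt y) := by
      rw [cVel, step4.mfderiv]
      show (mfderiv 𝓘(ℝ, E) I Ψ y) ((1 : ℝ) • (Vt y)) = (mfderiv 𝓘(ℝ, E) I Ψ y) (Vt y)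
      rw [one_smul]
    -- the other computation of the same velocity
    have hlined : HasMFDerivAt 𝓘(ℝ) 𝓘(ℝ, E) (fun s : ℝ => z + s • wh) 0
        (ContinuousLinearMap.smulRight (1 : ℝ →L[ℝ] ℝ) wh) := by
      rw [hasMFDerivAt_iff_hasFDerivAt]
      have h1 : HasDerivAt (fun s : ℝ => z + s • wh) wh 0 := by
        simpa using ((hasDerivAt_id (0 : ℝ)).smul_const wh).const_add z
      rwa [hasDerivAt_iff_hasFDerivAt] at h1
    have hcz : HasMFDerivAt 𝓘(ℝ) I (fun s : ℝ => Ψ (z + s • wh)) 0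
        ((mfderiv 𝓘(ℝ, E) I Ψ z).comp
          (ContinuousLinearMap.smulRight (1 : ℝ →L[ℝ] ℝ) wh)) := by
      have h1 : MDifferentiableAt 𝓘(ℝ, E) I Ψ ((fun s : ℝ => z + s • wh) 0) := by
        simp only [zero_smul, add_zero]
        exact (hΨat z hzball).mdifferentiableAt top_ne0
      have h2 := h1.hasMFDerivAt.comp 0 hlined
      have h3 : ((fun s : ℝ => z + s • wh) 0) = z := by simp
      rw [h3] at h2
      exact h2
    have hczvel : cVel I (fun s : ℝ => Ψ (z + s • wh)) 0 = wg := by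
      rw [cVel, hcz.mfderiv]
      show (mfderiv 𝓘(ℝ, E) I Ψ z) ((1 : ℝ) • wh) = wg
      rw [one_smul, hwhdef]
      have := hAinv z hzball wg
      rw [hgdef] at this
      exact this
    have hassoc : (fun s : ℝ => Ψ (z + s • wh) * g⁻¹ * Ψ y)
        = (fun s : ℝ => Ψ (z + s • wh) * (g⁻¹ * Ψ y)) := by
      funext s; rw [mul_assoc]
    have hval2 : cVel I (fun s : ℝ => Ψ (z + s • wh) * g⁻¹ * Ψ y) 0
        = TransR I (g⁻¹ * Ψ y) g wg := by
      rw [hassoc]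
      have h1 := cVel_rmul (g⁻¹ * Ψ y) (fun s : ℝ => Ψ (z + s • wh)) 0 hcz.mdifferentiableAt
      rw [h1, hczvel]
      congr 1
      simp only [zero_smul, add_zero]
      rw [hgdef]
    have hfin : TransR I (g⁻¹ * Ψ y) g wg = TransR I (Ψ y) 1 w := by
      rw [hwgdef]
      have hcmp := compR (I := I) (g⁻¹ * Ψ y) g 1
      rw [mul_inv_cancel_left, one_mul] at hcmp
      have := congrArg (fun L : E →L[ℝ] E => L w) hcmp
      simp only [ContinuousLinearMap.comp_apply] at this
      exact this.symm
    rw [← hval1, hval2, hfin]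
  -- solve the ODE in the chart
  have hV1 : ContDiffAt ℝ 1 Vt z := by
    have h1 : ContDiffAt ℝ (⊤ : ℕ∞) Vt z :=
      (hVsm z hzball).contDiffAt (Metric.isOpen_ball.mem_nhds hzball)
    exact h1.of_le (by exact_mod_cast le_top)
  obtain ⟨f, hf0, ε₀, hε₀, hode⟩ :=
    hV1.exists_forall_mem_closedBall_exists_eq_forall_mem_Ioo_hasDerivAt₀ (0 : ℝ)
  have h0mem : (0 : ℝ) ∈ Set.Ioo (0 - ε₀) (0 + ε₀) := by constructor <;> linarith
  have hcf : ContinuousAt f 0 := (hode 0 h0mem).continuousAt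
  obtain ⟨ε₁, hε₁pos, hε₁⟩ := Metric.continuousAt_iff.mp hcf δ hδpos
  set τ : ℝ := min ε₀ ε₁ with hτdef
  have hτpos : 0 < τ := lt_min hε₀ hε₁pos
  set S : Set ℝ := Set.Ioo (-τ) τ with hSdef
  have hSopen : IsOpen S := isOpen_Ioo
  have hfS : ∀ s ∈ S, HasDerivAt f (Vt (f s)) s := by
    intro s hs
    apply hode
    constructor
    · have := hs.1; have h2 : τ ≤ ε₀ := min_le_left _ _; linarith
    · have := hs.2; have h2 : τ ≤ ε₀ := min_le_left _ _; linarith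
  have hfball : ∀ s ∈ S, f s ∈ Metric.ball z δ := by
    intro s hs
    have h1 : dist s 0 < ε₁ := by
      rw [Real.dist_eq, sub_zero]
      have h2 : τ ≤ ε₁ := min_le_right _ _
      rw [abs_lt]
      exact ⟨by linarith [hs.1], by linarith [hs.2]⟩
    have h2 := hε₁ h1
    rw [hf0] at h2
    exact Metric.mem_ball.mpr h2
  -- bootstrap smoothness of the solution
  have hboot : ∀ n : ℕ, ContDiffOn ℝ n f S := by
    intro n
    induction n with
    | zero => exact contDiffOn_zero.mpr fun s hs => (hfS s hs).continuousAt.continuousWithinAt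
    | succ n ih =>
      have hcast : ((n + 1 : ℕ) : WithTop ℕ∞) = (n : WithTop ℕ∞) + 1 := by push_cast; rfl
      rw [hcast, contDiffOn_succ_iff_deriv_of_isOpen hSopen]
      refine ⟨fun s hs => (hfS s hs).differentiableAt.differentiableWithinAt, ?_, ?_⟩
      · intro hω
        exact absurd hω (by simp)
      · have hcomp : ContDiffOn ℝ n (fun s => Vt (f s)) S :=
          (hVsm.of_le (by exact_mod_cast le_top)).comp ih fun s hs => hfball s hs
        exact hcomp.congr fun s hs => (hfS s hs).deriv
  have hfsm : ContDiffOn ℝ (⊤ : ℕ∞) f S := contDiffOn_infty.mpr hboot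
  -- the analytic time change
  set K : ℝ := 2 / τ with hKdef
  have hKpos : 0 < K := by positivity
  set σ : ℝ → ℝ := fun t => K⁻¹ * Real.sin (K * (t - t₀)) with hσdef
  set η : ℝ → ℝ := fun t => Real.cos (K * (t - t₀)) with hηdef
  have hσ0 : σ t₀ = 0 := by simp [hσdef]
  have hη0 : η t₀ = 1 := by simp [hηdef]
  have hσS : ∀ t, σ t ∈ S := by
    intro t
    have h1 : |σ t| ≤ K⁻¹ := by
      rw [hσdef]
      simp only []
      rw [abs_mul, abs_of_pos (inv_pos.mpr hKpos)]
      have h2 : |Real.sin (K * (t - t₀))| ≤ 1 :=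
        abs_le.mpr ⟨Real.neg_one_le_sin _, Real.sin_le_one _⟩
      nlinarith [inv_pos.mpr hKpos]
    have h3 : K⁻¹ = τ / 2 := by rw [hKdef]; field_simp
    rw [h3] at h1
    rw [abs_le] at h1
    exact ⟨by linarith [h1.1], by linarith [h1.2]⟩
  have hσd : ∀ t, HasDerivAt σ (η t) t := by
    intro t
    have h1 : HasDerivAt (fun s : ℝ => K * (s - t₀)) K t := by
      simpa using ((hasDerivAt_id t).sub_const t₀).const_mul K
    have h2 := (Real.hasDerivAt_sin (K * (t - t₀))).comp t h1
    have h3 := h2.const_mul K⁻¹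
    refine h3.congr_deriv ?_
    rw [hηdef]
    field_simp
  have hσsm : ContDiff ℝ (⊤ : ℕ∞) σ :=
    contDiff_const.mul (Real.contDiff_sin.comp (contDiff_const.mul (contDiff_id.sub contDiff_const)))
  -- the solution and the input
  set a : G := g⁻¹ * Y with hadef
  set X : ℝ → G := fun t => Ψ (f (σ t)) * a with hXdef
  set u : ℝ → E := fun t => η t • w with hudef
  have hu : ContDiff ℝ (⊤ : ℕ∞) u :=
    (Real.contDiff_cos.comp (contDiff_const.mul (contDiff_id.sub contDiff_const))).smul
      contDiff_const
  have hXsm : ContMDiff 𝓘(ℝ) I (⊤ : ℕ∞) X := by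
    intro t
    have m1 : ContMDiffAt 𝓘(ℝ) 𝓘(ℝ) (⊤ : ℕ∞) σ t := (contMDiff_iff_contDiff.mpr hσsm).contMDiffAt
    have m2 : ContMDiffAt 𝓘(ℝ) 𝓘(ℝ, E) (⊤ : ℕ∞) f (σ t) := by
      have h1 : ContDiffAt ℝ (⊤ : ℕ∞) f (σ t) :=
        (hfsm (σ t) (hσS t)).contDiffAt (hSopen.mem_nhds (hσS t))
      exact contMDiffAt_iff_contDiffAt.mpr h1
    have m3 : ContMDiffAt 𝓘(ℝ, E) I (⊤ : ℕ∞) Ψ (f (σ t)) := hΨat _ (hfball _ (hσS t))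
    have m4 : ContMDiffAt I I (⊤ : ℕ∞) (fun q : G => q * a) (Ψ (f (σ t))) :=
      contMDiff_mul_right.contMDiffAt
    exact m4.comp t ((m3.comp t (m2.comp t m1)))
  have hsol : ∀ t, cVel I X t = TransR I (X t) 1 (u t) := by
    intro t
    have hsS := hσS t
    have hfb := hfball _ hsS
    have h1 : HasDerivAt (fun t' : ℝ => f (σ t')) (η t • Vt (f (σ t))) t :=
      (hfS _ hsS).scomp t (hσd t)
    have h1' : HasMFDerivAt 𝓘(ℝ) 𝓘(ℝ, E) (fun t' : ℝ => f (σ t')) t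
        (ContinuousLinearMap.smulRight (1 : ℝ →L[ℝ] ℝ) (η t • Vt (f (σ t)))) := by
      rw [hasMFDerivAt_iff_hasFDerivAt]
      rwa [hasDerivAt_iff_hasFDerivAt] at h1
    have h2 : HasMFDerivAt 𝓘(ℝ) I (fun t' : ℝ => Ψ (f (σ t'))) t
        ((mfderiv 𝓘(ℝ, E) I Ψ (f (σ t))).comp
          (ContinuousLinearMap.smulRight (1 : ℝ →L[ℝ] ℝ) (η t • Vt (f (σ t))))) :=
      ((hΨat _ hfb).mdifferentiableAt top_ne0).hasMFDerivAt.comp t h1'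
    have h3 : HasMFDerivAt I I (fun q : G => q * a) (Ψ (f (σ t)))
        (mfderiv I I (fun q : G => q * a) (Ψ (f (σ t)))) :=
      (mdiffR a (Ψ (f (σ t)))).hasMFDerivAt
    have h4 : HasMFDerivAt 𝓘(ℝ) I X t
        ((mfderiv I I (fun q : G => q * a) (Ψ (f (σ t)))).comp
          ((mfderiv 𝓘(ℝ, E) I Ψ (f (σ t))).comp
            (ContinuousLinearMap.smulRight (1 : ℝ →L[ℝ] ℝ) (η t • Vt (f (σ t)))))) :=
      h3.comp t h2
    have h5 : cVel I X t = TransR I a (Ψ (f (σ t)))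
        ((mfderiv 𝓘(ℝ, E) I Ψ (f (σ t))) (η t • Vt (f (σ t)))) := by
      rw [cVel, h4.mfderiv]
      show (TransR I a (Ψ (f (σ t))))
          ((mfderiv 𝓘(ℝ, E) I Ψ (f (σ t))) ((1 : ℝ) • (η t • Vt (f (σ t)))))
        = TransR I a (Ψ (f (σ t))) ((mfderiv 𝓘(ℝ, E) I Ψ (f (σ t))) (η t • Vt (f (σ t))))
      rw [one_smul]
    have hsm : TransR I a (Ψ (f (σ t))) ((mfderiv 𝓘(ℝ, E) I Ψ (f (σ t))) (η t • Vt (f (σ t))))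
        = η t • TransR I a (Ψ (f (σ t))) ((mfderiv 𝓘(ℝ, E) I Ψ (f (σ t))) (Vt (f (σ t)))) :=
      (congrArg (TransR I a (Ψ (f (σ t)))) (map_smul (mfderiv 𝓘(ℝ, E) I Ψ (f (σ t))) (η t) (Vt (f (σ t))))).trans (map_smul _ _ _)
    rw [h5, hsm, hVkey _ hfb]
    have h6 : TransR I a (Ψ (f (σ t))) (TransR I (Ψ (f (σ t))) 1 w)
        = TransR I (Ψ (f (σ t)) * a) 1 w := by
      have hcmp := compR (I := I) a (Ψ (f (σ t))) 1
      rw [one_mul] at hcmp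
      have := congrArg (fun L : E →L[ℝ] E => L w) hcmp
      simp only [ContinuousLinearMap.comp_apply] at this
      exact this.symm
    rw [h6, hudef, hXdef]
    simp only [map_smul]
  have hX0 : X t₀ = Y := by
    rw [hXdef]
    simp only [hσ0]
    rw [hf0, hgdef, hadef, mul_inv_cancel_left]
  have hu0 : u t₀ = w := by rw [hudef]; simp [hη0]
  exact ⟨u, X, hu, ⟨hXsm, hsol⟩, hX0, hu0⟩


end Dev5d

/- STATEMENT 15: for a smooth cost `f` and any Riemannian metric, a general
observer `X̂̇ = F(X̂,Y,w,t)` for the left invariant system `Ẋ = Xu` with exact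
measurements `Y = X`, `w = u` produces the autonomous gradient error dynamics
`Ė_r = −grad₁ f(E_r, e)` for the canonical right invariant error along every
pair of solutions and every admissible input if and only if
`F(X̂,Y,w,t) = X̂w − T_{X̂Y⁻¹}R_Y (grad₁ f(X̂Y⁻¹, e))`; analogously for the right
invariant system `Ẋ = vX`, the canonical left invariant error satisfies
`Ė_l = −grad₁ f(E_l, e)` along all solution pairs if and only if
`F(X̂,Y,w,t) = wX̂ − T_{Y⁻¹X̂}L_Y (grad₁ f(Y⁻¹X̂, e))`. -/
theorem gradient_like_observer_characterisation
    {E : Type*} [NormedAddCommGroup E] [NormedSpace ℝ E] [FiniteDimensional ℝ E]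
    {H : Type*} [TopologicalSpace H] {I : ModelWithCorners ℝ E H}
    {G : Type*} [TopologicalSpace G] [ChartedSpace H G] [Group G] [LieGroup I (⊤ : ℕ∞) G]
    [ConnectedSpace G]
    (f : G → G → ℝ) (hf : ContMDiff (I.prod I) 𝓘(ℝ) (⊤ : ℕ∞) (fun p : G × G => f p.1 p.2))
    (m : G → E →ₗ[ℝ] E →ₗ[ℝ] ℝ) (hm : IsRiemMetric m)
    (gradf : G → G → E) (hgrad : IsGradFst I m f gradf)
    (F : G → G → E → ℝ → E)
    (hex_l : ∀ u : ℝ → E, ContDiff ℝ (⊤ : ℕ∞) u → ∀ X : ℝ → G, SolLeftInvSys I u X →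
      ∀ (t₀ : ℝ) (Xh₀ : G), ∃ Xh : ℝ → G, Xh t₀ = Xh₀ ∧ SolObserver I F u X Xh)
    (hex_r : ∀ v : ℝ → E, ContDiff ℝ (⊤ : ℕ∞) v → ∀ X : ℝ → G, SolRightInvSys I v X →
      ∀ (t₀ : ℝ) (Xh₀ : G), ∃ Xh : ℝ → G, Xh t₀ = Xh₀ ∧ SolObserver I F v X Xh) :
    ((∀ u : ℝ → E, ContDiff ℝ (⊤ : ℕ∞) u → ∀ X Xh : ℝ → G,
        SolLeftInvSys I u X → SolObserver I F u X Xh →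
        ∀ t, cVel I (fun s => Xh s * (X s)⁻¹) t = - gradf (Xh t * (X t)⁻¹) 1)
      ↔ (∀ (Xh Y : G) (w : E) (t : ℝ),
          F Xh Y w t = TransL I Xh 1 w - TransR I Y (Xh * Y⁻¹) (gradf (Xh * Y⁻¹) 1)))
    ∧
    ((∀ v : ℝ → E, ContDiff ℝ (⊤ : ℕ∞) v → ∀ X Xh : ℝ → G,
        SolRightInvSys I v X → SolObserver I F v X Xh →
        ∀ t, cVel I (fun s => (X s)⁻¹ * Xh s) t = - gradf ((X t)⁻¹ * Xh t) 1)
      ↔ (∀ (Xh Y : G) (w : E) (t : ℝ),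
          F Xh Y w t = TransR I Xh 1 w - TransL I Y (Y⁻¹ * Xh) (gradf (Y⁻¹ * Xh) 1))) := by
  constructor
  · constructor
    · -- necessity, left invariant system
      intro hLHS Xh0 Y w t
      obtain ⟨u, X, hu, hX, hX0, hu0⟩ := exists_sol_left (I := I) t Y w
      obtain ⟨Xh, hXh0, hobs⟩ := hex_l u hu X hX t Xh0
      have herr := hLHS u hu X Xh hX hobs t
      rw [cVel_err_r u X Xh hX hobs.1 t] at herr
      have hval : cVel I Xh t = F Xh0 Y w t := by
        have h0 := hobs.2 t
        rw [hX0, hu0, hXh0] at h0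
        exact h0
      rw [hval, hX0, hu0, hXh0] at herr
      have h2 := congrArg (fun v : E => TransR I Y (Xh0 * Y⁻¹) v) herr
      simp only [map_sub, map_neg] at h2
      have e1 : TransR I Y (Xh0 * Y⁻¹) (TransR I Y⁻¹ Xh0 (F Xh0 Y w t)) = F Xh0 Y w t := by
        have h := congrArg (fun L : E →L[ℝ] E => L (F Xh0 Y w t)) (cancelR (I := I) Y Xh0)
        simp only [ContinuousLinearMap.comp_apply, ContinuousLinearMap.id_apply] at h
        exact h
      have e2 : TransL I Xh0 Y⁻¹ (TransR I Y⁻¹ 1 w) = TransR I Y⁻¹ Xh0 (TransL I Xh0 1 w) := by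
        have h := congrArg (fun L : E →L[ℝ] E => L w) (mixed_unit (I := I) Xh0 Y⁻¹)
        simp only [ContinuousLinearMap.comp_apply] at h
        exact h
      have e3 : TransR I Y (Xh0 * Y⁻¹) (TransR I Y⁻¹ Xh0 (TransL I Xh0 1 w))
          = TransL I Xh0 1 w := by
        have h := congrArg (fun L : E →L[ℝ] E => L (TransL I Xh0 1 w)) (cancelR (I := I) Y Xh0)
        simp only [ContinuousLinearMap.comp_apply, ContinuousLinearMap.id_apply] at h
        exact h
      rw [e2, e1, e3] at h2
      have h3 := sub_eq_iff_eq_add.mp h2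
      rw [neg_add_eq_sub] at h3
      exact h3
    · intro hF u hu X Xh hX hobs t
      exact suff_left gradf F hF u X Xh hX hobs t
  · constructor
    · -- necessity, right invariant system
      intro hLHS Xh0 Y w t
      obtain ⟨v, X, hv, hX, hX0, hv0⟩ := exists_sol_right (I := I) t Y w
      obtain ⟨Xh, hXh0, hobs⟩ := hex_r v hv X hX t Xh0
      have herr := hLHS v hv X Xh hX hobs t
      rw [cVel_err_l v X Xh hX hobs.1 t] at herr
      have hval : cVel I Xh t = F Xh0 Y w t := by
        have h0 := hobs.2 t
        rw [hX0, hv0, hXh0] at h0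
        exact h0
      rw [hval, hX0, hv0, hXh0] at herr
      have h2 := congrArg (fun q : E => TransL I Y (Y⁻¹ * Xh0) q) herr
      simp only [map_sub, map_neg] at h2
      have e1 : TransL I Y (Y⁻¹ * Xh0) (TransL I Y⁻¹ Xh0 (F Xh0 Y w t)) = F Xh0 Y w t := by
        have h := congrArg (fun L : E →L[ℝ] E => L (F Xh0 Y w t)) (cancelL (I := I) Y Xh0)
        simp only [ContinuousLinearMap.comp_apply, ContinuousLinearMap.id_apply] at h
        exact h
      have e2 : TransR I Xh0 Y⁻¹ (TransL I Y⁻¹ 1 w) = TransL I Y⁻¹ Xh0 (TransR I Xh0 1 w) := by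
        have h := congrArg (fun L : E →L[ℝ] E => L w) (mixed_unit (I := I) Y⁻¹ Xh0)
        simp only [ContinuousLinearMap.comp_apply] at h
        exact h.symm
      have e3 : TransL I Y (Y⁻¹ * Xh0) (TransL I Y⁻¹ Xh0 (TransR I Xh0 1 w))
          = TransR I Xh0 1 w := by
        have h := congrArg (fun L : E →L[ℝ] E => L (TransR I Xh0 1 w)) (cancelL (I := I) Y Xh0)
        simp only [ContinuousLinearMap.comp_apply, ContinuousLinearMap.id_apply] at h
        exact h
      rw [e2, e1, e3] at h2
      have h3 := sub_eq_iff_eq_add.mp h2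
      rw [neg_add_eq_sub] at h3
      exact h3
    · intro hF v hv X Xh hX hobs t
      exact suff_right gradf F hF v X Xh hX hobs t
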